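/- arXiv:1503.07358 — 2 statements merged into one kernel-verified Lean document; each statement's English description precedes it below -/
import Mathlib

section
/- The symmetric block matrix Q = [[K^ω (K^V)^{-1}(K^ω + K^droop), -K^ω], [-K^ω, K^V]] is positive definite, where K^ω, K^V, K^droop are diagonal matrices with positive diagonal entries. -/
/-!
A block matrix `[[A, B], [Bᴴ, D]]` with `D` positive definite is positive semidefinite exactly
when its Schur complement `A - B D⁻¹ Bᴴ` is, and its determinant is `det D · det (A - B D⁻¹ Bᴴ)`;
so it is positive definite exactly when the Schur complement is. For `Q` the Schur complement
with respect to `K^V` is the positive diagonal matrix `K^ω (K^V)⁻¹ K^droop`.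
-/

open Matrix
open scoped ComplexOrder

theorem Matrix.PosDef.posDef_fromBlocks₂₂_iff {𝕜 m n : Type*} [RCLike 𝕜] [Fintype m] [Fintype n]
    [DecidableEq m] [DecidableEq n] (A : Matrix m m 𝕜) (B : Matrix m n 𝕜) {D : Matrix n n 𝕜}
    (hD : D.PosDef) [Invertible D] :
    (fromBlocks A B Bᴴ D).PosDef ↔ (A - B * D⁻¹ * Bᴴ).PosDef := by
  have hdet : (fromBlocks A B Bᴴ D).det = D.det * (A - B * D⁻¹ * Bᴴ).det := by
    rw [det_fromBlocks₂₂, invOf_eq_nonsing_inv]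
  constructor
  · intro hQ
    rw [((PosDef.fromBlocks₂₂ A B hD).mp hQ.posSemidef).posDef_iff_det_ne_zero]
    exact right_ne_zero_of_mul (hdet ▸ hQ.det_pos.ne')
  · intro hS
    rw [((PosDef.fromBlocks₂₂ A B hD).mpr hS.posSemidef).posDef_iff_det_ne_zero, hdet]
    exact mul_ne_zero hD.det_pos.ne' hS.det_pos.ne'

/-- The symmetric block matrix
`Q = [[K^ω (K^V)⁻¹ (K^ω + K^droop), -K^ω], [-K^ω, K^V]]`
is positive definite, where `K^ω, K^V, K^droop` are diagonal matrices with
positive diagonal entries. -/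
theorem blockQ_posDef {n : ℕ} (kw kV kd : Fin n → ℝ)
    (hkw : ∀ i, 0 < kw i) (hkV : ∀ i, 0 < kV i) (hkd : ∀ i, 0 < kd i)
    (Kw KV Kd : Matrix (Fin n) (Fin n) ℝ)
    (hKw : Kw = Matrix.diagonal kw) (hKV : KV = Matrix.diagonal kV)
    (hKd : Kd = Matrix.diagonal kd) :
    (Matrix.fromBlocks (Kw * KV⁻¹ * (Kw + Kd)) (-Kw) (-Kw) KV).PosDef := by
  subst hKw hKV hKd
  have hKV : (diagonal kV).PosDef := posDef_diagonal_iff.mpr hkV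
  have := hKV.isUnit.invertible
  have hB : (-diagonal kw)ᴴ = -diagonal kw := by simp
  have hSchur : diagonal kw * (diagonal kV)⁻¹ * (diagonal kw + diagonal kd)
      - -diagonal kw * (diagonal kV)⁻¹ * (-diagonal kw)ᴴ
      = diagonal fun i => kw i * kd i / kV i := by
    have hKVinv : (diagonal kV)⁻¹ = diagonal kV⁻¹ :=
      inv_eq_right_inv <| by simp [diagonal_mul_diagonal, fun i => (hkV i).ne']
    rw [hB, hKVinv]
    simp only [diagonal_mul_diagonal, diagonal_add, diagonal_neg, neg_mul, mul_neg, neg_neg,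
      diagonal_sub]
    congr 1
    ext i
    simp only [Pi.inv_apply]
    ring
  have hS : (diagonal fun i => kw i * kd i / kV i).PosDef :=
    posDef_diagonal_iff.mpr fun i => div_pos (mul_pos (hkw i) (hkd i)) (hkV i)
  have hQ := (hKV.posDef_fromBlocks₂₂_iff _ _).mpr (hSchur ▸ hS)
  rwa [hB] at hQ
end

section
/- Let Q1 be the positive definite 2n×2n matrix [[K^ω (K^V)^{-1}(K^ω + K^droop), -K^ω], [-K^ω, V^nom·L_R + K^V]] where L_R is a graph Laplacian with positive edge weights and V^nom > 0. Then for every vector (ω, V) ∈ ℝ^{2n}, the quadratic form satisfies ω^T K^ω(K^V)^{-1}(K^ω+K^droop) ω - 2 ω^T K^ω V + V^T(V^nom·L_R + K^V) V ≥ 0, with equality iff ω = 0 and V = 0. -/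
/-! With diagonal gains the form splits into a sum over nodes of the 2×2 forms
`kwᵢ kVᵢ⁻¹ (kwᵢ + kdᵢ) ωᵢ² - 2 kwᵢ ωᵢ Vᵢ + kVᵢ Vᵢ²` plus `V^nom` times the Laplacian form.
Completing the square, each node form is `kVᵢ⁻¹ ((kVᵢ Vᵢ - kwᵢ ωᵢ)² + kwᵢ kdᵢ ωᵢ²)`, positive
unless `ωᵢ = Vᵢ = 0`, and the Laplacian form is `½ ∑ᵢⱼ wᵢⱼ (Vᵢ - Vⱼ)² ≥ 0`. -/

open Matrix

section Laplacian

variable {ι R : Type*} [Fintype ι] [DecidableEq ι]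

theorem laplacian_eq_diagonal_sub [Ring R] (w : ι → ι → R) (hw_diag : ∀ i, w i i = 0) :
    (Matrix.of fun i j => if i = j then ∑ k, w i k else -(w i j)) =
      diagonal (fun i => ∑ k, w i k) - Matrix.of w := by
  ext i j
  by_cases h : i = j
  · subst h; simp [hw_diag]
  · simp [h]

theorem dotProduct_laplacian_mulVec [CommRing R] (w : ι → ι → R) (v : ι → R) :
    v ⬝ᵥ (diagonal (fun i => ∑ k, w i k) - Matrix.of w) *ᵥ v =
      ∑ i, ∑ j, w i j * (v i ^ 2 - v i * v j) := by
  rw [sub_mulVec, dotProduct_sub]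
  simp only [dotProduct, mulVec_diagonal]
  simp only [mulVec, dotProduct, of_apply, Finset.mul_sum, Finset.sum_mul, ← Finset.sum_sub_distrib]
  exact Finset.sum_congr rfl fun i _ => Finset.sum_congr rfl fun j _ => by ring

theorem two_mul_dotProduct_laplacian_mulVec [CommRing R] (w : ι → ι → R)
    (hw_symm : ∀ i j, w i j = w j i) (v : ι → R) :
    2 * (v ⬝ᵥ (diagonal (fun i => ∑ k, w i k) - Matrix.of w) *ᵥ v) =
      ∑ i, ∑ j, w i j * (v i - v j) ^ 2 := by
  have hswap : ∑ i, ∑ j, w i j * (v i ^ 2 - v i * v j) =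
      ∑ i, ∑ j, w i j * (v j ^ 2 - v j * v i) := by
    rw [Finset.sum_comm]
    simp_rw [hw_symm]
  rw [dotProduct_laplacian_mulVec, two_mul]
  nth_rw 2 [hswap]
  simp only [← Finset.sum_add_distrib]
  exact Finset.sum_congr rfl fun i _ => Finset.sum_congr rfl fun j _ => by ring

theorem dotProduct_laplacian_mulVec_nonneg [CommRing R] [LinearOrder R] [IsStrictOrderedRing R]
    (w : ι → ι → R) (hw_symm : ∀ i j, w i j = w j i) (hw_nonneg : ∀ i j, 0 ≤ w i j) (v : ι → R) :
    0 ≤ v ⬝ᵥ (diagonal (fun i => ∑ k, w i k) - Matrix.of w) *ᵥ v := by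
  have hsum : 0 ≤ ∑ i, ∑ j, w i j * (v i - v j) ^ 2 :=
    Finset.sum_nonneg fun i _ => Finset.sum_nonneg fun j _ =>
      mul_nonneg (hw_nonneg i j) (sq_nonneg _)
  rw [← two_mul_dotProduct_laplacian_mulVec w hw_symm] at hsum
  exact nonneg_of_mul_nonneg_right hsum two_pos

end Laplacian

theorem inv_diagonal_of_ne_zero {ι K : Type*} [Fintype ι] [DecidableEq ι] [Field K]
    (v : ι → K) (hv : ∀ i, v i ≠ 0) : (diagonal v)⁻¹ = diagonal v⁻¹ := by
  refine inv_eq_right_inv ?_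
  rw [diagonal_mul_diagonal, ← diagonal_one]
  exact congrArg diagonal (funext fun i => mul_inv_cancel₀ (hv i))

noncomputable def busQuadForm (kw kV kd x y : ℝ) : ℝ :=
  kw * kV⁻¹ * (kw + kd) * x ^ 2 - 2 * (kw * x * y) + kV * y ^ 2

theorem busQuadForm_eq {kw kV : ℝ} (kd x y : ℝ) (hkV : kV ≠ 0) :
    busQuadForm kw kV kd x y = kV⁻¹ * ((kV * y - kw * x) ^ 2 + kw * kd * x ^ 2) := by
  unfold busQuadForm
  field_simp
  ring

theorem busQuadForm_nonneg {kw kV kd : ℝ} (hkV : 0 < kV) (hkwd : 0 ≤ kw * kd) (x y : ℝ) :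
    0 ≤ busQuadForm kw kV kd x y := by
  rw [busQuadForm_eq kd x y hkV.ne']
  have := mul_nonneg hkwd (sq_nonneg x)
  positivity

theorem busQuadForm_eq_zero_iff {kw kV kd : ℝ} (hkV : 0 < kV) (hkwd : 0 < kw * kd) (x y : ℝ) :
    busQuadForm kw kV kd x y = 0 ↔ x = 0 ∧ y = 0 := by
  rw [busQuadForm_eq kd x y hkV.ne', mul_eq_zero, inv_eq_zero, or_iff_right hkV.ne',
    add_eq_zero_iff_of_nonneg (sq_nonneg _) (mul_nonneg hkwd.le (sq_nonneg x)),
    mul_eq_zero, or_iff_right hkwd.ne', sq_eq_zero_iff, sq_eq_zero_iff]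
  constructor
  · rintro ⟨hlin, rfl⟩
    exact ⟨rfl, by simpa [hkV.ne'] using hlin⟩
  · rintro ⟨rfl, rfl⟩
    simp

theorem Q1_quadForm_eq_sum {n : Type*} [Fintype n] [DecidableEq n] (kw kV kd : n → ℝ)
    (hkV : ∀ i, kV i ≠ 0) (L : Matrix n n ℝ) (c : ℝ) (ω V : n → ℝ) :
    ω ⬝ᵥ ((diagonal kw * (diagonal kV)⁻¹ * (diagonal kw + diagonal kd)) *ᵥ ω)
        - 2 * (ω ⬝ᵥ (diagonal kw *ᵥ V)) + V ⬝ᵥ ((c • L + diagonal kV) *ᵥ V) =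
      ∑ i, busQuadForm (kw i) (kV i) (kd i) (ω i) (V i) + c * (V ⬝ᵥ L *ᵥ V) := by
  rw [inv_diagonal_of_ne_zero kV hkV, diagonal_mul_diagonal, diagonal_add,
    diagonal_mul_diagonal, add_mulVec, smul_mulVec, dotProduct_add, dotProduct_smul, smul_eq_mul]
  simp only [dotProduct, mulVec_diagonal, Pi.inv_apply,
    busQuadForm, Finset.mul_sum, ← Finset.sum_sub_distrib, ← Finset.sum_add_distrib]
  exact Finset.sum_congr rfl fun i _ => by ring

theorem Q1_quadform_nonneg_general {n : ℕ} (kw kV kd : Fin n → ℝ)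
    (hkw : ∀ i, 0 < kw i) (hkV : ∀ i, 0 < kV i) (hkd : ∀ i, 0 < kd i)
    (Kw KV Kd : Matrix (Fin n) (Fin n) ℝ)
    (hKw : Kw = Matrix.diagonal kw) (hKV : KV = Matrix.diagonal kV)
    (hKd : Kd = Matrix.diagonal kd)
    (w : Fin n → Fin n → ℝ)
    (hw_symm : ∀ i j, w i j = w j i) (hw_nonneg : ∀ i j, 0 ≤ w i j)
    (hw_diag : ∀ i, w i i = 0)
    (LR : Matrix (Fin n) (Fin n) ℝ)
    (hLR : LR = Matrix.of fun i j => if i = j then ∑ k, w i k else -(w i j))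
    (Vnom : ℝ) (hVnom : 0 < Vnom) (ω V : Fin n → ℝ) :
    0 ≤ ω ⬝ᵥ ((Kw * KV⁻¹ * (Kw + Kd)) *ᵥ ω) - 2 * (ω ⬝ᵥ (Kw *ᵥ V))
        + V ⬝ᵥ ((Vnom • LR + KV) *ᵥ V) ∧
      (ω ⬝ᵥ ((Kw * KV⁻¹ * (Kw + Kd)) *ᵥ ω) - 2 * (ω ⬝ᵥ (Kw *ᵥ V))
        + V ⬝ᵥ ((Vnom • LR + KV) *ᵥ V) = 0 ↔ ω = 0 ∧ V = 0) := by
  subst hKw hKV hKd hLR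
  rw [Q1_quadForm_eq_sum kw kV kd (fun i => (hkV i).ne'), laplacian_eq_diagonal_sub w hw_diag]
  have hbus i : 0 ≤ busQuadForm (kw i) (kV i) (kd i) (ω i) (V i) :=
    busQuadForm_nonneg (hkV i) (mul_pos (hkw i) (hkd i)).le _ _
  have hsum := Finset.sum_nonneg fun i (_ : i ∈ Finset.univ) => hbus i
  have hlap := mul_nonneg hVnom.le (dotProduct_laplacian_mulVec_nonneg w hw_symm hw_nonneg V)
  refine ⟨add_nonneg hsum hlap, ⟨fun h => ?_, ?_⟩⟩
  · have hzero := (Finset.sum_eq_zero_iff_of_nonneg fun i _ => hbus i).1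
      ((add_eq_zero_iff_of_nonneg hsum hlap).1 h).1
    have hi i := (busQuadForm_eq_zero_iff (hkV i) (mul_pos (hkw i) (hkd i)) _ _).1
      (hzero i (Finset.mem_univ i))
    exact ⟨funext fun i => (hi i).1, funext fun i => (hi i).2⟩
  · rintro ⟨rfl, rfl⟩
    simp [busQuadForm]

/-- With `K^ω, K^V, K^droop` positive diagonal, `L_R` the Laplacian of a
connected weighted graph and `V^nom > 0`, the quadratic form of
`Q1 = [[K^ω(K^V)⁻¹(K^ω+K^droop), -K^ω], [-K^ω, V^nom·L_R + K^V]]` satisfies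
`ωᵀ K^ω(K^V)⁻¹(K^ω+K^droop) ω - 2 ωᵀ K^ω V + Vᵀ(V^nom·L_R + K^V) V ≥ 0`,
with equality iff `ω = 0` and `V = 0`. -/
theorem Q1_quadform_nonneg {n : ℕ} (kw kV kd : Fin n → ℝ)
    (hkw : ∀ i, 0 < kw i) (hkV : ∀ i, 0 < kV i) (hkd : ∀ i, 0 < kd i)
    (Kw KV Kd : Matrix (Fin n) (Fin n) ℝ)
    (hKw : Kw = Matrix.diagonal kw) (hKV : KV = Matrix.diagonal kV)
    (hKd : Kd = Matrix.diagonal kd)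
    (w : Fin n → Fin n → ℝ)
    (hw_symm : ∀ i j, w i j = w j i) (hw_nonneg : ∀ i j, 0 ≤ w i j)
    (hw_diag : ∀ i, w i i = 0)
    (hconn : ∀ i j : Fin n, Relation.ReflTransGen (fun a b => 0 < w a b) i j)
    (LR : Matrix (Fin n) (Fin n) ℝ)
    (hLR : LR = Matrix.of fun i j => if i = j then ∑ k, w i k else -(w i j))
    (Vnom : ℝ) (hVnom : 0 < Vnom) (ω V : Fin n → ℝ) :
    0 ≤ ω ⬝ᵥ ((Kw * KV⁻¹ * (Kw + Kd)) *ᵥ ω) - 2 * (ω ⬝ᵥ (Kw *ᵥ V))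
        + V ⬝ᵥ ((Vnom • LR + KV) *ᵥ V) ∧
      (ω ⬝ᵥ ((Kw * KV⁻¹ * (Kw + Kd)) *ᵥ ω) - 2 * (ω ⬝ᵥ (Kw *ᵥ V))
        + V ⬝ᵥ ((Vnom • LR + KV) *ᵥ V) = 0 ↔ ω = 0 ∧ V = 0) :=
  Q1_quadform_nonneg_general kw kV kd hkw hkV hkd Kw KV Kd hKw hKV hKd w hw_symm hw_nonneg hw_diag
    LR hLR Vnom hVnom ω V
end
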